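/- arXiv:2105.00462 — 2 statements merged into one kernel-verified Lean document; each statement's English description precedes it below -/
import Mathlib

section
/- (Quantum Schwartz–Zippel lemma) Let n ≥ 1, let 0 < r₁ ≤ 1/2, and let X be a nonzero 2^n × 2^n complex matrix whose rank is at most e^{n·h(r₁)}. Then deg(X)/n ≥ 1/2 − √(r₁(1−r₁)). -/
noncomputable section

open scoped Matrix ComplexOrder

/-- The algebra of operators on `(ℂ²)^{⊗ n}`, as `2^n × 2^n` matrices indexed by `Fin n → Fin 2`. -/
abbrev Mq (n : ℕ) := Matrix (Fin n → Fin 2) (Fin n → Fin 2) ℂ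

/-- Normalized trace `τ(X) = 2^{-n} tr X`. -/
def qTau {n : ℕ} (X : Mq n) : ℂ := ((2 : ℂ) ^ n)⁻¹ * X.trace

/-- Real part of the normalized trace. -/
def qTauR {n : ℕ} (X : Mq n) : ℝ := (qTau X).re

/-- Normalized Hilbert–Schmidt inner product `⟨X, Y⟩ = τ(X† Y)`. -/
def qInner {n : ℕ} (X Y : Mq n) : ℂ := qTau (Xᴴ * Y)

/-- `|X| = √(X† X)`. -/
def mAbs {n : ℕ} (X : Mq n) : Mq n :=
  (Matrix.posSemidef_conjTranspose_mul_self X).1.eigenvectorUnitary.1 *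
    Matrix.diagonal ((↑) ∘ (√·) ∘ (Matrix.posSemidef_conjTranspose_mul_self X).1.eigenvalues) *
    (star (Matrix.posSemidef_conjTranspose_mul_self X).1.eigenvectorUnitary : Mq n)

/-- The entropy `Ent(X) = τ(X ln X) − τ(X) ln τ(X)` (with the convention `0 ln 0 = 0`),
for positive semidefinite `X`, via the continuous functional calculus. -/
def mEnt {n : ℕ} (X : Mq n) : ℝ :=
  qTauR (cfc (fun x : ℝ => x * Real.log x) X) - qTauR X * Real.log (qTauR X)

/-- Real powers `X^p` of a positive semidefinite matrix, by functional calculus on the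
support (`0 ^ p = 0` for `p ≠ 0`). -/
def mPow {n : ℕ} (X : Mq n) (p : ℝ) : Mq n := cfc (fun x : ℝ => x ^ p) X

/-- Normalized Schatten `p`-norm `‖X‖_p = (τ(|X|^p))^{1/p}`. -/
def schatten {n : ℕ} (p : ℝ) (X : Mq n) : ℝ := qTauR (mPow (mAbs X) p) ^ (1 / p)

/-- Conditional expectation onto the `i`-th qubit being maximally mixed:
`E_i = I^{⊗(i-1)} ⊗ (τ(·) I) ⊗ I^{⊗(n-i)}`. -/
def condExpQ {n : ℕ} (i : Fin n) (X : Mq n) : Mq n :=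
  Matrix.of fun a b =>
    if a i = b i then
      (2 : ℂ)⁻¹ * ∑ c : Fin 2, X (Function.update a i c) (Function.update b i c)
    else 0

/-- The Lindblad generator `K_n = Σ_i L̂_i`, where `L̂_i` acts as `L(X) = X − τ(X) I`
on the `i`-th tensor factor. -/
def Kq (n : ℕ) (X : Mq n) : Mq n := ∑ i : Fin n, (X - condExpQ i X)

/-- The depolarizing channel on the `i`-th qubit:
`e^{-t} X + (1 - e^{-t}) τ_i(X) ⊗ I_i`. -/
def depolStep {n : ℕ} (t : ℝ) (i : Fin n) (X : Mq n) : Mq n :=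
  (Real.exp (-t) : ℂ) • X + ((1 : ℂ) - (Real.exp (-t) : ℂ)) • condExpQ i X

/-- `Ψ_t^{⊗ n}`: the `n`-fold tensor power of the qubit depolarizing channel, i.e. the
composition over all qubits `i` of the depolarizing channel acting on the `i`-th factor. -/
def psiDep {n : ℕ} (t : ℝ) (X : Mq n) : Mq n :=
  (List.finRange n).foldr (fun i Y => depolStep t i Y) X

/-- The binary entropy function `h(s) = −s ln s − (1−s) ln(1−s)`. -/
def binEnt (s : ℝ) : ℝ := -(s * Real.log s) - (1 - s) * Real.log (1 - s)

/-- `h⁻¹ : [0, ln 2] → [0, 1/2]`, the inverse of the restriction of the binary entropy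
function to `[0, 1/2]`. -/
def binEntInv (y : ℝ) : ℝ := Function.invFunOn binEnt (Set.Icc 0 (1 / 2)) y

/-- `φ(ξ) = 1/2 − √(h⁻¹(ln 2 − ξ)(1 − h⁻¹(ln 2 − ξ)))`. -/
def phiF (ξ : ℝ) : ℝ :=
  1 / 2 - Real.sqrt (binEntInv (Real.log 2 - ξ) * (1 - binEntInv (Real.log 2 - ξ)))

/-- `α(ξ) = φ(ξ)/ξ` for `ξ ∈ (0, ln 2]`, with `α(0) = 1/2` by continuous extension. -/
def alphaF (ξ : ℝ) : ℝ := if ξ = 0 then 1 / 2 else ξ⁻¹ * phiF ξ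

/-- The Pauli matrices `σ₀ = I, σ₁, σ₂, σ₃`. -/
def pauli : Fin 4 → Matrix (Fin 2) (Fin 2) ℂ :=
  ![1, !![0, 1; 1, 0], !![0, -Complex.I; Complex.I, 0], !![1, 0; 0, -1]]

/-- The tensor product `σ_s = σ_{s₁} ⊗ ⋯ ⊗ σ_{sₙ}` of Pauli matrices. -/
def pauliT {n : ℕ} (s : Fin n → Fin 4) : Mq n :=
  Matrix.of fun a b => ∏ i, pauli (s i) (a i) (b i)

/-- The weight `|s|`: the number of nonzero coordinates of `s`. -/
def wt {n : ℕ} (s : Fin n → Fin 4) : ℕ := (Finset.univ.filter fun i => s i ≠ 0).card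

open Classical in
/-- The degree of `X`: the maximal weight `|s|` over `s` with nonzero Fourier
coefficient `x̂_s = ⟨σ_s, X⟩`. -/
noncomputable def qDeg {n : ℕ} (X : Mq n) : ℕ :=
  (Finset.univ.filter fun s : Fin n → Fin 4 => qInner (pauliT s) X ≠ 0).sup wt

/-!
Split off the first qubit: the Pauli coefficients `x̂_{(j, s)}` of `X` are the coefficients
`ŷ_s` of the slice `Y_j = τ₁((σ_j ⊗ 1)† X)` on the other `n - 1` qubits, and
`rank Y_j ≤ 2 rank X`. If some `Y_j` with `j ≠ 0` is nonzero, its degree is at most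
`deg X - 1`; otherwise `X = 1 ⊗ Y₀` and `rank X = 2 rank Y₀`. Either way, induction on `n`
gives `2^n ≤ 4^{deg X} rank X`. Taking logarithms and using `h(p) ≤ 2 ln 2 · √(p(1-p))`
gives the bound on `deg X / n`.
-/

namespace Matrix

variable {l m n K : Type*} [Fintype n] [Field K]

theorem rank_pos_of_ne_zero [DecidableEq n] {A : Matrix m n K} (hA : A ≠ 0) : 0 < A.rank := by
  rw [pos_iff_ne_zero, Ne, rank, Submodule.finrank_eq_zero, LinearMap.range_eq_bot]
  refine fun h => hA (ext fun i j => ?_)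
  simpa using congrFun (LinearMap.congr_fun h (Pi.single j 1)) i

theorem rank_add_le (A B : Matrix m n K) : (A + B).rank ≤ A.rank + B.rank := by
  rw [rank, rank, rank, mulVecLin_add]
  exact (Submodule.finrank_mono (LinearMap.range_add_le _ _)).trans
    (Submodule.finrank_add_le_finrank_add_finrank _ _)

theorem rank_smul_le [DecidableEq n] (c : K) (A : Matrix m n K) : (c • A).rank ≤ A.rank := by
  simpa using rank_mul_le_left A (c • (1 : Matrix n n K))

theorem rank_submatrix_le' [Fintype l] [Fintype m] (A : Matrix m n K) (f : l → m) (g : l → n) :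
    (A.submatrix f g).rank ≤ A.rank :=
  calc (A.submatrix f g).rank = ((A.submatrix f id)ᵀ.submatrix g (Equiv.refl l)).rank := by
        rw [← rank_transpose]; rfl
    _ ≤ (A.submatrix f (Equiv.refl n)).rank := by
        rw [← rank_transpose (A.submatrix f _)]; exact rank_submatrix_le _ _ _
    _ ≤ A.rank := rank_submatrix_le _ _ _

theorem rank_fromBlocks_zero_zero [Fintype m] [DecidableEq m] [DecidableEq n]
    (A : Matrix m m K) (D : Matrix n n K) : (fromBlocks A 0 0 D).rank = A.rank + D.rank := by
  set b := (Pi.basisFun K m).prod (Pi.basisFun K n)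
  have hblocks : fromBlocks A 0 0 D = LinearMap.toMatrix b b ((toLin' A).prodMap (toLin' D)) := by
    rw [LinearMap.toMatrix_prodMap, LinearMap.toMatrix_eq_toMatrix',
      LinearMap.toMatrix_eq_toMatrix', LinearMap.toMatrix'_toLin', LinearMap.toMatrix'_toLin']
  rw [hblocks, rank_eq_finrank_range_toLin _ b b, toLin_toMatrix, LinearMap.range_prodMap]
  have hinj : Function.Injective ((LinearMap.range (toLin' A)).subtype.prodMap
      (LinearMap.range (toLin' D)).subtype) :=
    Prod.map_injective.2 ⟨Subtype.val_injective, Subtype.val_injective⟩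
  have := LinearMap.finrank_range_of_inj hinj
  rwa [LinearMap.range_prodMap, Submodule.range_subtype, Submodule.range_subtype,
    Module.finrank_prod] at this

end Matrix

open Matrix

section Pauli

variable {n : ℕ}

theorem pauliT_zero : pauliT (0 : Fin n → Fin 4) = 1 := by
  ext a b
  simp [pauliT, pauli, one_apply, Finset.prod_boole, funext_iff]

theorem pauliT_cons (j : Fin 4) (s : Fin n → Fin 4) (c c' : Fin 2) (a b : Fin n → Fin 2) :
    pauliT (Fin.cons j s) (Fin.cons c a) (Fin.cons c' b) = pauli j c c' * pauliT s a b := by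
  simp [pauliT, Fin.prod_univ_succ]

theorem sum_pauli_mul_star (c c' e e' : Fin 2) :
    ∑ j, pauli j c c' * star (pauli j e e') = if e = c ∧ e' = c' then 2 else 0 := by
  fin_cases c <;> fin_cases c' <;> fin_cases e <;> fin_cases e' <;>
    simp [pauli, Fin.sum_univ_four, Complex.ext_iff] <;> norm_num

theorem sum_qubits_succ {M : Type*} [AddCommMonoid M] (f : (Fin (n + 1) → Fin 2) → M) :
    ∑ a, f a = ∑ c, ∑ a, f (Fin.cons c a) := by
  rw [← (Fin.consEquiv fun _ => Fin 2).sum_comp, Fintype.sum_prod_type]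
  rfl

theorem qInner_eq_sum (A B : Mq n) :
    qInner A B = ((2 : ℂ) ^ n)⁻¹ * ∑ a, ∑ b, star (A a b) * B a b := by
  simp only [qInner, qTau, trace, Matrix.diag, mul_apply, conjTranspose_apply]
  rw [Finset.sum_comm]

/-- `τ₁((σ_j ⊗ 1)† X)`, the partial trace over the first qubit. -/
def pauliSlice (j : Fin 4) (X : Mq (n + 1)) : Mq n :=
  (2 : ℂ)⁻¹ • ∑ c, ((pauliT (Fin.cons j 0))ᴴ * X).submatrix (Fin.cons c ·) (Fin.cons c ·)

theorem pauliSlice_apply (j : Fin 4) (X : Mq (n + 1)) (a b : Fin n → Fin 2) :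
    pauliSlice j X a b =
      2⁻¹ * ∑ c, ∑ e, star (pauli j e c) * X (Fin.cons e a) (Fin.cons c b) := by
  simp only [pauliSlice, Matrix.smul_apply, Matrix.sum_apply, submatrix_apply, mul_apply,
    conjTranspose_apply, smul_eq_mul, sum_qubits_succ, pauliT_cons, pauliT_zero, one_apply]
  simp [apply_ite]

theorem sum_pauli_mul_pauliSlice (X : Mq (n + 1)) (c c' : Fin 2) (a b : Fin n → Fin 2) :
    ∑ j, pauli j c c' * pauliSlice j X a b = X (Fin.cons c a) (Fin.cons c' b) := by
  calc ∑ j, pauli j c c' * pauliSlice j X a b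
      = 2⁻¹ * ∑ d, ∑ e, (∑ j, pauli j c c' * star (pauli j e d)) *
          X (Fin.cons e a) (Fin.cons d b) := by
        simp only [pauliSlice_apply, Finset.mul_sum, Finset.sum_mul]
        rw [Finset.sum_comm]
        refine Finset.sum_congr rfl fun d _ => ?_
        rw [Finset.sum_comm]
        refine Finset.sum_congr rfl fun e _ => Finset.sum_congr rfl fun j _ => ?_
        ring
    _ = X (Fin.cons c a) (Fin.cons c' b) := by
        simp only [sum_pauli_mul_star]
        simp [ite_and]

theorem qInner_pauliSlice (j : Fin 4) (s : Fin n → Fin 4) (X : Mq (n + 1)) :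
    qInner (pauliT s) (pauliSlice j X) = qInner (pauliT (Fin.cons j s)) X := by
  rw [qInner_eq_sum, qInner_eq_sum]
  simp only [sum_qubits_succ, pauliT_cons, pauliSlice_apply, star_mul, Finset.mul_sum]
  conv_rhs =>
    rw [Finset.sum_comm]
    enter [2, a]
    rw [Finset.sum_congr rfl fun e _ => Finset.sum_comm, Finset.sum_comm]
    enter [2, b]
    rw [Finset.sum_comm]
  refine Finset.sum_congr rfl fun a _ => Finset.sum_congr rfl fun b _ =>
    Finset.sum_congr rfl fun c _ => Finset.sum_congr rfl fun e _ => ?_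
  ring

theorem eq_zero_of_forall_pauliSlice_eq_zero {X : Mq (n + 1)} (h : ∀ j, pauliSlice j X = 0) :
    X = 0 := by
  ext a b
  have := sum_pauli_mul_pauliSlice X (a 0) (b 0) (Fin.tail a) (Fin.tail b)
  rw [Fin.cons_self_tail, Fin.cons_self_tail] at this
  simp [← this, h]

theorem eq_zero_of_forall_qInner_pauliT_eq_zero :
    ∀ {n : ℕ} {X : Mq n}, (∀ s, qInner (pauliT s) X = 0) → X = 0
  | 0, X, h => by
      ext a b
      have h0 := h 0
      simp [qInner_eq_sum, pauliT] at h0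
      exact (congrArg₂ X (Subsingleton.elim _ _) (Subsingleton.elim _ _)).trans h0
  | _ + 1, _, h => eq_zero_of_forall_pauliSlice_eq_zero fun _ =>
      eq_zero_of_forall_qInner_pauliT_eq_zero fun _ => by rw [qInner_pauliSlice]; exact h _

theorem wt_cons (j : Fin 4) (s : Fin n → Fin 4) :
    wt (Fin.cons j s : Fin (n + 1) → Fin 4) = wt s + if j = 0 then 0 else 1 := by
  simp only [wt, Finset.card_filter, Fin.sum_univ_succ, Fin.cons_zero, Fin.cons_succ]
  split_ifs <;> simp_all [add_comm]

theorem wt_le_qDeg {X : Mq n} {s : Fin n → Fin 4} (h : qInner (pauliT s) X ≠ 0) :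
    wt s ≤ qDeg X := by
  classical
  exact Finset.le_sup (Finset.mem_filter.2 ⟨Finset.mem_univ _, h⟩)

theorem exists_wt_eq_qDeg {X : Mq n} (hX : X ≠ 0) :
    ∃ s, qInner (pauliT s) X ≠ 0 ∧ wt s = qDeg X := by
  classical
  obtain ⟨s₀, hs₀⟩ : ∃ s, qInner (pauliT s) X ≠ 0 := by
    by_contra! h
    exact hX (eq_zero_of_forall_qInner_pauliT_eq_zero h)
  obtain ⟨s, hs, hsup⟩ := Finset.exists_mem_eq_sup
    (Finset.univ.filter fun s : Fin n → Fin 4 => qInner (pauliT s) X ≠ 0)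
    ⟨s₀, by simpa using hs₀⟩ wt
  exact ⟨s, (Finset.mem_filter.1 hs).2, by rw [qDeg, hsup]⟩

theorem qDeg_pauliSlice_add_le {j : Fin 4} {X : Mq (n + 1)} (hY : pauliSlice j X ≠ 0) :
    qDeg (pauliSlice j X) + (if j = 0 then 0 else 1) ≤ qDeg X := by
  obtain ⟨s, hs, hwt⟩ := exists_wt_eq_qDeg hY
  rw [← hwt, ← wt_cons]
  exact wt_le_qDeg (by rwa [← qInner_pauliSlice])

theorem rank_pauliSlice_le (j : Fin 4) (X : Mq (n + 1)) :
    (pauliSlice j X).rank ≤ 2 * X.rank := by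
  set M := (pauliT (Fin.cons j 0))ᴴ * X
  calc (pauliSlice j X).rank ≤ (∑ c, M.submatrix (Fin.cons c ·) (Fin.cons c ·)).rank :=
        rank_smul_le _ _
    _ ≤ M.rank + M.rank := by
        rw [Fin.sum_univ_two]
        exact (rank_add_le _ _).trans
          (add_le_add (rank_submatrix_le' _ _ _) (rank_submatrix_le' _ _ _))
    _ ≤ 2 * X.rank := by
        rw [← two_mul]
        exact Nat.mul_le_mul_left _ (rank_mul_le_right _ _)

def firstQubitSplit : (Fin n → Fin 2) ⊕ (Fin n → Fin 2) ≃ (Fin (n + 1) → Fin 2) :=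
  (Equiv.boolProdEquivSum _).symm.trans <|
    (Equiv.prodCongr finTwoEquiv.symm (Equiv.refl _)).trans (Fin.consEquiv fun _ => Fin 2)

@[simp]
theorem firstQubitSplit_inl (a : Fin n → Fin 2) : firstQubitSplit (.inl a) = Fin.cons 0 a := rfl

@[simp]
theorem firstQubitSplit_inr (a : Fin n → Fin 2) : firstQubitSplit (.inr a) = Fin.cons 1 a := rfl

theorem rank_eq_two_mul_rank_pauliSlice_zero {X : Mq (n + 1)}
    (h : ∀ j ≠ 0, pauliSlice j X = 0) : X.rank = 2 * (pauliSlice 0 X).rank := by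
  have hX : ∀ c c' a b, X (Fin.cons c a) (Fin.cons c' b) =
      (1 : Matrix (Fin 2) (Fin 2) ℂ) c c' * pauliSlice 0 X a b := fun c c' a b => by
    rw [← sum_pauli_mul_pauliSlice X, Fin.sum_univ_four, h 1 (by decide), h 2 (by decide),
      h 3 (by decide)]
    simp [pauli]
  have hblocks : X.submatrix firstQubitSplit firstQubitSplit =
      fromBlocks (pauliSlice 0 X) 0 0 (pauliSlice 0 X) := by
    ext (a | a) (b | b) <;> simp [hX]
  rw [← rank_submatrix X firstQubitSplit firstQubitSplit, hblocks, rank_fromBlocks_zero_zero,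
    two_mul]

theorem two_pow_le_four_pow_qDeg_mul_rank : ∀ {n : ℕ} {X : Mq n}, X ≠ 0 →
    2 ^ n ≤ 4 ^ qDeg X * X.rank
  | 0, _, hX => by
    rw [pow_zero]
    exact (rank_pos_of_ne_zero hX).trans_le (Nat.le_mul_of_pos_left _ (by positivity))
  | n + 1, X, hX => by
    by_cases h : ∀ j ≠ 0, pauliSlice j X = 0
    · have hY : pauliSlice 0 X ≠ 0 := fun h0 =>
        hX (eq_zero_of_forall_pauliSlice_eq_zero fun j => by by_cases hj : j = 0 <;> simp_all)
      have hdeg := qDeg_pauliSlice_add_le hY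
      rw [if_pos rfl, add_zero] at hdeg
      calc 2 ^ (n + 1) = 2 * 2 ^ n := by ring
        _ ≤ 2 * (4 ^ qDeg (pauliSlice 0 X) * (pauliSlice 0 X).rank) :=
          Nat.mul_le_mul_left _ (two_pow_le_four_pow_qDeg_mul_rank hY)
        _ ≤ 4 ^ qDeg X * X.rank := by
          rw [rank_eq_two_mul_rank_pauliSlice_zero h, mul_left_comm]
          gcongr
          norm_num
    · push Not at h
      obtain ⟨j, hj, hY⟩ := h
      have hdeg := qDeg_pauliSlice_add_le hY
      rw [if_neg hj] at hdeg
      calc 2 ^ (n + 1) = 2 * 2 ^ n := by ring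
        _ ≤ 2 * (4 ^ qDeg (pauliSlice j X) * (pauliSlice j X).rank) :=
          Nat.mul_le_mul_left _ (two_pow_le_four_pow_qDeg_mul_rank hY)
        _ ≤ 2 * (4 ^ qDeg (pauliSlice j X) * (2 * X.rank)) := by
          gcongr
          exact rank_pauliSlice_le j X
        _ = 4 ^ (qDeg (pauliSlice j X) + 1) * X.rank := by ring
        _ ≤ 4 ^ qDeg X * X.rank := by
          gcongr
          norm_num

end Pauli

namespace Real

theorem neg_log_le_one_sub_div_sqrt {q : ℝ} (hq₀ : 0 < q) (hq₁ : q ≤ 1) :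
    -log q ≤ (1 - q) / √q := by
  -- `log t ≤ sinh (log t) = (t - t⁻¹) / 2` for `t = (√q)⁻¹ ≥ 1`
  have hs : 0 < √q := sqrt_pos.2 hq₀
  have ht : 0 ≤ log (√q)⁻¹ := log_nonneg ((one_le_inv₀ hs).2 (sqrt_le_one.2 hq₁))
  have h := self_le_sinh_iff.2 ht
  rw [sinh_log (inv_pos.2 hs), inv_inv, log_inv, log_sqrt hq₀.le] at h
  have : (√q)⁻¹ - √q = (1 - q) / √q := by
    field_simp
    rw [sq_sqrt hq₀.le]
  linarith

theorem binEntropy_le_sqrt_mul_add {p : ℝ} (hp₀ : 0 < p) (hp₁ : p < 1) :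
    binEntropy p ≤ √(p * (1 - p)) * (√p + √(1 - p)) := by
  have hq₀ : 0 < 1 - p := by linarith
  have h₁ := mul_le_mul_of_nonneg_left (neg_log_le_one_sub_div_sqrt hp₀ hp₁.le) hp₀.le
  have h₂ := mul_le_mul_of_nonneg_left
    (neg_log_le_one_sub_div_sqrt hq₀ (by linarith)) hq₀.le
  have e₁ : p * ((1 - p) / √p) = √p * (1 - p) := by
    rw [mul_div_assoc', mul_comm, mul_div_assoc, div_sqrt, mul_comm]
  have e₂ : (1 - p) * ((1 - (1 - p)) / √(1 - p)) = √(1 - p) * p := by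
    rw [sub_sub_cancel, mul_div_assoc', mul_comm, mul_div_assoc, div_sqrt, mul_comm]
  calc binEntropy p = p * -log p + (1 - p) * -log (1 - p) := by
        simp only [binEntropy, log_inv]
    _ ≤ √p * (1 - p) + √(1 - p) * p := by linarith
    _ = √(p * (1 - p)) * (√p + √(1 - p)) := by
        rw [sqrt_mul hp₀.le]
        linear_combination (-√p) * sq_sqrt hq₀.le + (-√(1 - p)) * sq_sqrt hp₀.le

theorem binEntropy_le_log_two_sub_sq {p : ℝ} (hp₀ : 0 ≤ p) (hp₁ : p ≤ 1) :
    binEntropy p ≤ log 2 - (1 - 2 * p) ^ 2 / 2 := by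
  wlog hp : p ≤ 2⁻¹ generalizing p
  · have := this (p := 1 - p) (by linarith) (by linarith) (by linarith)
    rw [binEntropy_one_sub] at this
    linarith
  have hmono : MonotoneOn (fun p => binEntropy p + (1 - 2 * p) ^ 2 / 2) (Set.Icc 0 2⁻¹) := by
    refine monotoneOn_of_hasDerivWithinAt_nonneg (convex_Icc 0 2⁻¹) (by fun_prop)
      (f' := fun x => log (1 - x) - log x - 2 * (1 - 2 * x)) (fun x hx => ?_) fun x hx => ?_
    · rw [interior_Icc] at hx
      have hsq : HasDerivAt (fun x => (1 - 2 * x) ^ 2 / 2) (-(2 * (1 - 2 * x))) x :=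
        (((((hasDerivAt_id x).const_mul 2).const_sub 1).pow 2).div_const 2).congr_deriv
          (by simp; ring)
      exact (((hasDerivAt_binEntropy hx.1.ne' (by linarith [hx.2])).add hsq).congr_deriv
        (by ring)).hasDerivWithinAt
    · rw [interior_Icc] at hx
      -- `2 y ≤ log ((1 + y) / (1 - y))` at `y = 1 - 2 x`
      have := sum_range_le_log_div (x := 1 - 2 * x) (by linarith [hx.2]) (by linarith [hx.1]) 1
      rw [show (1 + (1 - 2 * x)) / (1 - (1 - 2 * x)) = (1 - x) / x by field_simp; ring,
        log_div (by linarith [hx.2]) hx.1.ne'] at this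
      norm_num at this
      linarith
  have := hmono ⟨hp₀, hp⟩ ⟨by norm_num, le_rfl⟩ hp
  simp only [binEntropy_two_inv] at this
  norm_num at this
  linarith

theorem binEntropy_le_two_mul_log_two_mul_sqrt {p : ℝ} (hp₀ : 0 ≤ p) (hp₁ : p ≤ 1) :
    binEntropy p ≤ 2 * log 2 * √(p * (1 - p)) := by
  -- With `s = √(p (1 - p))`: if `s ≤ log 2 - 1/2`, then
  -- `(√p + √(1 - p))² = 1 + 2 s ≤ 2 log 2 ≤ (2 log 2)²`; otherwise
  -- `log 2 - (1 - 4 s²) / 2 ≤ 2 s log 2`, as `s` lies between the roots `log 2 - 1/2` and `1/2`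
  -- of this quadratic.
  have hlog2 : 1 / 2 < log 2 := by linarith [log_two_gt_d9]
  have hs2 : √(p * (1 - p)) ^ 2 = p * (1 - p) := sq_sqrt (by nlinarith)
  by_cases hs : √(p * (1 - p)) ≤ log 2 - 1 / 2
  · rcases hp₀.eq_or_lt with rfl | hp₀
    · simp
    rcases hp₁.eq_or_lt with rfl | hp₁
    · simp
    have hsum : √p + √(1 - p) ≤ 2 * log 2 := by
      refine (pow_le_pow_iff_left₀ (by positivity) (by positivity) two_ne_zero).1 ?_
      rw [add_sq, sq_sqrt hp₀.le, sq_sqrt (by linarith), mul_assoc, ← sqrt_mul hp₀.le]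
      nlinarith
    calc binEntropy p ≤ √(p * (1 - p)) * (√p + √(1 - p)) :=
          binEntropy_le_sqrt_mul_add hp₀ hp₁
      _ ≤ √(p * (1 - p)) * (2 * log 2) := by gcongr
      _ = 2 * log 2 * √(p * (1 - p)) := mul_comm _ _
  · have hs_le : √(p * (1 - p)) ≤ 1 / 2 := by
      nlinarith [sq_nonneg (1 - 2 * p), sqrt_nonneg (p * (1 - p))]
    nlinarith [binEntropy_le_log_two_sub_sq hp₀ hp₁]

end Real

theorem binEnt_eq_binEntropy : binEnt = Real.binEntropy := by
  ext p
  simp only [binEnt, Real.binEntropy, Real.log_inv]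
  ring

/-- **Quantum Schwartz–Zippel lemma** (Theorem 5 of the paper): a nonzero operator of
rank at most `e^{n h(r₁)}` has degree at least `n (1/2 − √(r₁(1−r₁)))`. -/
theorem quantum_schwartz_zippel (n : ℕ) (hn : 1 ≤ n) (r₁ : ℝ) (hr₁ : 0 < r₁)
    (hr₁' : r₁ ≤ 1 / 2) (X : Mq n) (hX0 : X ≠ 0)
    (hrank : (X.rank : ℝ) ≤ Real.exp (n * binEnt r₁)) :
    1 / 2 - Real.sqrt (r₁ * (1 - r₁)) ≤ (qDeg X : ℝ) / n := by
  have hn' : (0 : ℝ) < n := by exact_mod_cast hn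
  have hlog2 : 0 < Real.log 2 := Real.log_pos one_lt_two
  have hdeg : (2 : ℝ) ^ n ≤ 4 ^ qDeg X * X.rank := by
    exact_mod_cast two_pow_le_four_pow_qDeg_mul_rank hX0
  have hlog : n * Real.log 2 ≤ qDeg X * (2 * Real.log 2) + n * binEnt r₁ := by
    have := Real.log_le_log (by positivity)
      (hdeg.trans (mul_le_mul_of_nonneg_left hrank (by positivity)))
    rwa [Real.log_mul (by positivity) (Real.exp_pos _).ne', Real.log_exp, Real.log_pow,
      Real.log_pow, show (4 : ℝ) = 2 ^ 2 by norm_num, Real.log_pow, Nat.cast_ofNat] at this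
  have hent : binEnt r₁ ≤ 2 * Real.log 2 * Real.sqrt (r₁ * (1 - r₁)) := by
    rw [binEnt_eq_binEntropy]
    exact Real.binEntropy_le_two_mul_log_two_mul_sqrt hr₁.le (by linarith)
  rw [le_div_iff₀ hn']
  nlinarith [mul_le_mul_of_nonneg_left hent hn'.le]

end
end

section
/- Let n ≥ 1 and let C be any 2^n × 2^n complex matrix. Then Re⟨C, K_n C⟩ + Re⟨C†, K_n C†⟩ ≥ ⟨|C|, K_n |C|⟩ + ⟨|C†|, K_n |C†|⟩, where |C| = √(C†C) and |C†| = √(CC†). -/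
noncomputable section

open scoped Matrix ComplexOrder

/-!
For each qubit `i` the conditional expectation has a Kraus form `E_i X = ½ ∑ K X Kᴴ`, and
`⟨X, K_n X⟩ = ∑ᵢ (⟨X, X⟩ - ⟨X, E_i X⟩)` with `⟨|C|, |C|⟩ = ⟨C, C⟩`, so it suffices to show
`Re tr(Cᴴ K C Kᴴ) + Re tr(C K Cᴴ Kᴴ) ≤ tr(|C| K |C| Kᴴ) + tr(|Cᴴ| K |Cᴴ| Kᴴ)` for every matrix `K`.
The polar decomposition `C = W |C|`, `|Cᴴ| = W |C| Wᴴ` makes both block matrices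
`M± = [[|Cᴴ|, ±C], [±Cᴴ, |C|]]` positive semidefinite, and the inequality is
`Re tr(M₋ (K ⊕ K) M₊ (K ⊕ K)ᴴ) ≥ 0`.
-/

open scoped MatrixOrder
open Matrix

theorem Matrix.trace_fromBlocks {ι m R : Type*} [Fintype ι] [Fintype m] [AddCommMonoid R]
    (A : Matrix ι ι R) (B : Matrix ι m R) (C : Matrix m ι R) (D : Matrix m m R) :
    (fromBlocks A B C D).trace = A.trace + D.trace := by
  simp [trace, Fintype.sum_sum_type]

section RCLike

variable {ι 𝕜 : Type*} [Fintype ι] [DecidableEq ι] [RCLike 𝕜]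

theorem Matrix.PosSemidef.sqrt_eq_spectral {A : Matrix ι ι 𝕜} (hA : A.PosSemidef) :
    CFC.sqrt A = hA.1.eigenvectorUnitary.1 * diagonal ((↑) ∘ (√·) ∘ hA.1.eigenvalues) *
      (star hA.1.eigenvectorUnitary : Matrix ι ι 𝕜) := by
  rw [CFC.sqrt_eq_real_sqrt A (nonneg_iff_posSemidef.mpr hA), cfcₙ_eq_cfc, hA.1.cfc_eq]
  rfl

theorem Matrix.cfc_mul_cfc (f g : ℝ → ℝ) (A : Matrix ι ι 𝕜) :
    cfc f A * cfc g A = cfc (fun x => f x * g x) A :=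
  (cfc_mul f g A (A.finite_real_spectrum.continuousOn f)
    (A.finite_real_spectrum.continuousOn g)).symm

theorem Matrix.IsHermitian.cfc_mul_self (f : ℝ → ℝ) {A : Matrix ι ι 𝕜} (hA : A.IsHermitian) :
    cfc f A * A = cfc (fun x => f x * x) A := by
  have h := cfc_mul_cfc f id A
  rwa [cfc_id ℝ A hA.isSelfAdjoint] at h

theorem Matrix.PosSemidef.re_trace_mul_nonneg {P Q : Matrix ι ι 𝕜} (hP : P.PosSemidef)
    (hQ : Q.PosSemidef) : 0 ≤ RCLike.re (P * Q).trace := by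
  set R := CFC.sqrt P
  have hR : R.IsHermitian := (nonneg_iff_posSemidef.mp (CFC.sqrt_nonneg P)).isHermitian
  have hRR : R * R = P := CFC.sqrt_mul_sqrt_self P (nonneg_iff_posSemidef.mpr hP)
  have hconj : (P * Q).trace = (Rᴴ * Q * R).trace := by
    rw [hR.eq, ← hRR, Matrix.mul_assoc, trace_mul_comm, Matrix.mul_assoc]
  rw [hconj]
  exact (RCLike.nonneg_iff.mp (hQ.conjTranspose_mul_mul_same R).trace_nonneg).1

variable (C : Matrix ι ι 𝕜)

theorem Matrix.isHermitian_abs : (CFC.abs C).IsHermitian :=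
  (nonneg_iff_posSemidef.mp (CFC.abs_nonneg C)).isHermitian

-- Since `0⁻¹ = 0`, `cfc (fun x => x⁻¹ * x) |C|` is the projection onto the range of `|C|`.
theorem Matrix.mul_cfc_inv_mul_self_abs :
    C * cfc (fun x : ℝ => x⁻¹ * x) (CFC.abs C) = C := by
  have hQ : C * cfc (fun x : ℝ => 1 - x⁻¹ * x) (CFC.abs C) = 0 := by
    rw [← conjTranspose_mul_self_eq_zero, conjTranspose_mul, ← star_eq_conjTranspose,
      (cfc_predicate (fun x : ℝ => 1 - x⁻¹ * x) (CFC.abs C)).star_eq, Matrix.mul_assoc,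
      ← Matrix.mul_assoc Cᴴ, ← star_eq_conjTranspose, ← CFC.abs_mul_abs]
    simp only [← Matrix.mul_assoc, (isHermitian_abs C).cfc_mul_self, cfc_mul_cfc]
    refine (cfc_congr fun x _ => ?_).trans (cfc_zero ℝ _)
    rcases eq_or_ne x 0 with rfl | hx
    · simp
    · simp [hx]
  rwa [cfc_sub (fun _ => 1) _ _ (finite_real_spectrum.continuousOn _)
    (finite_real_spectrum.continuousOn _), cfc_const_one ℝ (CFC.abs C), Matrix.mul_sub,
    Matrix.mul_one, sub_eq_zero, eq_comm] at hQ

theorem Matrix.mul_cfc_inv_abs_mul_abs :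
    C * cfc (·⁻¹ : ℝ → ℝ) (CFC.abs C) * CFC.abs C = C := by
  rw [Matrix.mul_assoc, (isHermitian_abs C).cfc_mul_self, mul_cfc_inv_mul_self_abs]

theorem Matrix.abs_conjTranspose_eq_mul_cfc_inv_abs_mul :
    CFC.abs Cᴴ = C * cfc (·⁻¹ : ℝ → ℝ) (CFC.abs C) * Cᴴ := by
  set S := CFC.abs C
  set B := cfc (·⁻¹ : ℝ → ℝ) S
  have hB : 0 ≤ B := cfc_nonneg fun x hx =>
    inv_nonneg.2 (spectrum_nonneg_of_nonneg (CFC.abs_nonneg C) hx)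
  have hBSSB : B * (S * S) * B = cfc (fun x : ℝ => x⁻¹ * x) S := by
    rw [← Matrix.mul_assoc, (isHermitian_abs C).cfc_mul_self, (isHermitian_abs C).cfc_mul_self,
      cfc_mul_cfc]
    refine cfc_congr fun x _ => ?_
    rcases eq_or_ne x 0 with rfl | hx
    · simp
    · field_simp
  refine CFC.sqrt_unique ?_ (star_right_conjugate_nonneg hB C)
  calc C * B * star C * (C * B * star C) = C * (B * (star C * C) * B) * star C := by
        simp only [Matrix.mul_assoc]
    _ = star (star C) * star C := by
        rw [← CFC.abs_mul_abs, hBSSB, mul_cfc_inv_mul_self_abs, star_star]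

theorem Matrix.posSemidef_fromBlocks_abs :
    (fromBlocks (CFC.abs Cᴴ) C Cᴴ (CFC.abs C)).PosSemidef := by
  set S := CFC.abs C
  set W := C * cfc (·⁻¹ : ℝ → ℝ) S
  have hWS : W * S = C := mul_cfc_inv_abs_mul_abs C
  have hSW : S * Wᴴ = Cᴴ := by
    have hS : Sᴴ = S := (isHermitian_abs C).eq
    simpa only [conjTranspose_mul, hS] using congrArg conjTranspose hWS
  have hWSW : W * S * Wᴴ = CFC.abs Cᴴ := by
    rw [abs_conjTranspose_eq_mul_cfc_inv_abs_mul, hWS, conjTranspose_mul,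
      (cfc_predicate (·⁻¹ : ℝ → ℝ) S).isHermitian.eq, Matrix.mul_assoc]
  have hblock : fromBlocks (CFC.abs Cᴴ) C Cᴴ S = fromRows W 1 * S * (fromRows W 1)ᴴ := by
    rw [conjTranspose_fromRows_eq_fromCols_conjTranspose, fromRows_mul, fromRows_mul_fromCols,
      hWSW, hWS, Matrix.one_mul, hSW, conjTranspose_one, Matrix.mul_one, Matrix.mul_one]
  rw [hblock]
  exact (nonneg_iff_posSemidef.mp (CFC.abs_nonneg C)).mul_mul_conjTranspose_same _

theorem Matrix.re_trace_conj_add_le_abs (K : Matrix ι ι 𝕜) :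
    RCLike.re (Cᴴ * (K * C * Kᴴ)).trace + RCLike.re (Cᴴᴴ * (K * Cᴴ * Kᴴ)).trace ≤
      RCLike.re ((CFC.abs C)ᴴ * (K * CFC.abs C * Kᴴ)).trace +
        RCLike.re ((CFC.abs Cᴴ)ᴴ * (K * CFC.abs Cᴴ * Kᴴ)).trace := by
  have hM := posSemidef_fromBlocks_abs C
  have hM' := posSemidef_fromBlocks_abs (-C)
  rw [conjTranspose_neg, CFC.abs_neg, CFC.abs_neg] at hM'
  have h := hM'.re_trace_mul_nonneg (hM.mul_mul_conjTranspose_same (fromBlocks K 0 0 K))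
  simp only [fromBlocks_conjTranspose, fromBlocks_multiply, conjTranspose_zero, Matrix.mul_zero,
    Matrix.zero_mul, add_zero, zero_add, trace_fromBlocks] at h
  rw [(isHermitian_abs C).eq, (isHermitian_abs Cᴴ).eq, conjTranspose_conjTranspose]
  simp only [Matrix.neg_mul, trace_add, trace_neg, map_add, map_neg, Matrix.mul_assoc] at h ⊢
  linarith

end RCLike

section Qubit

variable {n : ℕ}

-- `|d⟩⟨c|` on the `i`-th qubit, tensored with the identity.
def condExpKraus (i : Fin n) (d c : Fin 2) : Mq n :=
  of fun a b => if a i = d ∧ b = Function.update a i c then 1 else 0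

theorem condExpKraus_mul_mul_conjTranspose_apply (i : Fin n) (d c : Fin 2) (X : Mq n)
    (a b : Fin n → Fin 2) :
    (condExpKraus i d c * X * (condExpKraus i d c)ᴴ) a b =
      if a i = d ∧ b i = d then X (Function.update a i c) (Function.update b i c) else 0 := by
  simp [condExpKraus, mul_apply, conjTranspose_apply, ite_and, apply_ite (starRingEnd ℂ)]
  split_ifs <;> rfl

theorem condExpQ_eq_sum_condExpKraus (i : Fin n) (X : Mq n) :
    condExpQ i X = (2 : ℂ)⁻¹ •
      ∑ d : Fin 2, ∑ c : Fin 2, condExpKraus i d c * X * (condExpKraus i d c)ᴴ := by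
  ext a b
  simp only [Matrix.smul_apply, Matrix.sum_apply, condExpKraus_mul_mul_conjTranspose_apply,
    condExpQ, of_apply]
  rw [Finset.sum_comm, smul_eq_mul]
  by_cases h : a i = b i
  · simp [h]
  · rw [if_neg h]
    refine (mul_eq_zero_of_right _ (Finset.sum_eq_zero fun c _ =>
      Finset.sum_eq_zero fun d _ => if_neg fun hd => h (hd.1.trans hd.2.symm))).symm

theorem mAbs_eq_abs (X : Mq n) : mAbs X = CFC.abs X :=
  (posSemidef_conjTranspose_mul_self X).sqrt_eq_spectral.symm

theorem qInner_mAbs_self (X : Mq n) : qInner (mAbs X) (mAbs X) = qInner X X := by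
  rw [qInner, qInner, mAbs_eq_abs, (isHermitian_abs X).eq, CFC.abs_mul_abs, star_eq_conjTranspose]

theorem qInner_Kq (X : Mq n) :
    qInner X (Kq n X) = ∑ i, (qInner X X - qInner X (condExpQ i X)) := by
  simp only [Kq, qInner, qTau, trace_sum, trace_sub, Finset.mul_sum, mul_sub]

theorem re_qInner_condExpQ (i : Fin n) (X : Mq n) :
    (qInner X (condExpQ i X)).re = ((2 : ℝ) ^ (n + 1))⁻¹ *
      ∑ d : Fin 2, ∑ c : Fin 2,
        (Xᴴ * (condExpKraus i d c * X * (condExpKraus i d c)ᴴ)).trace.re := by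
  have hscalar : ((2 : ℂ) ^ n)⁻¹ * 2⁻¹ = (((2 : ℝ) ^ (n + 1))⁻¹ : ℝ) := by
    push_cast
    ring
  rw [qInner, qTau, condExpQ_eq_sum_condExpKraus, Matrix.mul_smul, trace_smul, smul_eq_mul,
    ← mul_assoc, hscalar, Complex.re_ofReal_mul]
  simp only [Matrix.mul_sum, trace_sum, Complex.re_sum]

theorem re_qInner_condExpQ_add_le_abs (i : Fin n) (C : Mq n) :
    (qInner C (condExpQ i C)).re + (qInner Cᴴ (condExpQ i Cᴴ)).re ≤
      (qInner (mAbs C) (condExpQ i (mAbs C))).re +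
        (qInner (mAbs Cᴴ) (condExpQ i (mAbs Cᴴ))).re := by
  simp only [re_qInner_condExpQ, mAbs_eq_abs, ← mul_add, ← Finset.sum_add_distrib]
  refine mul_le_mul_of_nonneg_left
    (Finset.sum_le_sum fun d _ => Finset.sum_le_sum fun c _ => ?_) (by positivity)
  exact re_trace_conj_add_le_abs C _

end Qubit

theorem dirichlet_form_abs_general (n : ℕ) (C : Mq n) :
    (qInner (mAbs C) (Kq n (mAbs C))).re + (qInner (mAbs Cᴴ) (Kq n (mAbs Cᴴ))).re ≤
      (qInner C (Kq n C)).re + (qInner Cᴴ (Kq n Cᴴ)).re := by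
  simp only [qInner_Kq, qInner_mAbs_self, Complex.re_sum, Complex.sub_re,
    ← Finset.sum_add_distrib]
  refine Finset.sum_le_sum fun i _ => ?_
  linarith [re_qInner_condExpQ_add_le_abs i C]

/-- Lemma 3 of the paper: `⟨C, K_n C⟩ + ⟨C†, K_n C†⟩ ≥ ⟨|C|, K_n |C|⟩ + ⟨|C†|, K_n |C†|⟩`. -/
theorem dirichlet_form_abs (n : ℕ) (hn : 1 ≤ n) (C : Mq n) :
    (qInner (mAbs C) (Kq n (mAbs C))).re + (qInner (mAbs Cᴴ) (Kq n (mAbs Cᴴ))).re ≤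
      (qInner C (Kq n C)).re + (qInner Cᴴ (Kq n Cᴴ)).re :=
  dirichlet_form_abs_general n C

end
end
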